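/- Let T1, T2, T3 be regular n-tournaments with adjacency matrices A, B, C, and let M be the 3n×3n block matrix with diagonal blocks A, B, C, with the (1,2) and (2,3) and (3,1) blocks equal to the all-ones n×n matrix J, and the (2,1), (3,2), (1,3) blocks equal to the zero matrix. Then M is the adjacency matrix of a regular 3n-tournament, and if at least one of T1, T2, T3 is not (n−1)-spectrally monomorphic, then the 3n-tournament with adjacency matrix M is not (3n−1)-spectrally monomorphic. -/

import Mathlib

/-!
Deleting a vertex from the block of `T c` leaves the matrix `N = cycleBlocks P Q S`, where `P` is an
`(n - 1)`-vertex subtournament of `T c` and `Q`, `S` are the two other (regular) blocks. Since the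
all-ones vectors are eigenvectors of `Q` and `S` for the eigenvalue `r = (n - 1) / 2`, a Schur
complement against the `Q`, `S` part reduces `xI - N` to the rank-one perturbation
`xI - P - n² / (x - r)² J` of `xI - P`, whence
`(X - r)² χ_N = χ_Q χ_S ((X - r)² χ_P - n² (χ_{P - J} - χ_P))`.
For a tournament `P - J = -(Pᵀ + I)`, so `χ_{P - J}(X) = ± χ_P(-X - 1)`, and the right-hand factor
then determines `χ_P` by a degree count. Hence equal characteristic polynomials of all
`(3n - 1)`-vertex subtournaments of `M` force equal ones for all `(n - 1)`-vertex subtournaments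
of `T c`.
-/

open Polynomial Matrix

/-- A tournament on a finite vertex type `V`, given by its adjacency matrix:
entries in `{0,1}`, zero diagonal, and `A + Aᵀ = J - I`. -/
def IsTournament {V : Type} [Fintype V] [DecidableEq V] (A : Matrix V V ℚ) : Prop :=
  (∀ i j, A i j = 0 ∨ A i j = 1) ∧ (∀ i, A i i = 0) ∧
    A + Aᵀ = Matrix.of (fun _ _ => (1 : ℚ)) - 1

/-- A regular tournament: every row sums to `(|V| - 1) / 2`. -/
def IsRegularTournament {V : Type} [Fintype V] (A : Matrix V V ℚ) : Prop :=
  ∀ i, ∑ j, A i j = ((Fintype.card V : ℚ) - 1) / 2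

/-- `A` is `k`-spectrally monomorphic: all `k × k` principal submatrices of `A`
have the same characteristic polynomial. -/
def SpecMono {V : Type} [Fintype V] [DecidableEq V] (k : ℕ) (A : Matrix V V ℚ) : Prop :=
  ∀ f g : Fin k → V, Function.Injective f → Function.Injective g →
    (A.submatrix f f).charpoly = (A.submatrix g g).charpoly

namespace Polynomial

variable {K : Type*} [Field K]

theorem eq_of_eval_eq_of_eval_ne_zero [Infinite K] {p q f : K[X]} (hf : f ≠ 0)
    (h : ∀ x, f.eval x ≠ 0 → p.eval x = q.eval x) : p = q :=
  eq_of_infinite_eval_eq p q <|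
    ((finite_setOfPred_isRoot hf).infinite_compl).mono fun x hx => h x hx

noncomputable def cycleFactor (r c : K) (k : ℕ) (p : K[X]) : K[X] :=
  (X - C r) ^ 2 * p - C c * ((-1) ^ k * p.comp (-X - 1) - p)

theorem cycleFactor_injective (r c : K) (k : ℕ) : Function.Injective (cycleFactor r c k) := by
  intro p q h
  by_contra hne
  set δ := p - q
  have hδ : δ ≠ 0 := sub_ne_zero.mpr hne
  have hδeq : (X - C r) ^ 2 * δ = C c * ((-1) ^ k * δ.comp (-X - 1) - δ) := by
    simp only [cycleFactor] at h
    simp only [δ, sub_comp]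
    linear_combination h
  have hlhs : ((X - C r) ^ 2 * δ).natDegree = δ.natDegree + 2 := by
    rw [natDegree_mul (pow_ne_zero 2 (X_sub_C_ne_zero r)) hδ, natDegree_pow, natDegree_X_sub_C]
    ring
  have hrhs : (C c * ((-1) ^ k * δ.comp (-X - 1) - δ)).natDegree ≤ δ.natDegree := by
    have hcomp : (δ.comp (-X - 1)).natDegree = δ.natDegree := by
      rw [natDegree_comp]
      have : (-X - 1 : K[X]).natDegree = 1 := by compute_degree!
      rw [this, mul_one]
    refine natDegree_C_mul_le _ _ |>.trans <| natDegree_sub_le _ _ |>.trans <| max_le ?_ le_rfl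
    exact natDegree_mul_le.trans (by simp [hcomp])
  rw [← hδeq, hlhs] at hrhs
  omega

end Polynomial

namespace Matrix

variable {R : Type*} {l m o : Type*}

def allOnes (m n R : Type*) [One R] : Matrix m n R := of fun _ _ => 1

@[simp]
theorem allOnes_apply [One R] (i : m) (j : l) : allOnes m l R i j = 1 := rfl

def cycleBlocks [Zero R] [One R] (P : Matrix l l R) (Q : Matrix m m R) (S : Matrix o o R) :
    Matrix (l ⊕ m ⊕ o) (l ⊕ m ⊕ o) R :=
  fromBlocks P (fromCols (allOnes l m R) 0) (fromRows 0 (allOnes o l R))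
    (fromBlocks Q (allOnes m o R) 0 S)

section CommRing

variable [CommRing R]

theorem allOnes_mul_allOnes [Fintype m] :
    allOnes l m R * allOnes m o R = (Fintype.card m : R) • allOnes l o R := by
  ext; simp [mul_apply]

theorem mul_allOnes_of_forall_sum_eq [Fintype m] {B : Matrix m m R} {r : R}
    (hB : ∀ i, ∑ j, B i j = r) :
    B * allOnes m o R = r • allOnes m o R := by
  ext; simp [mul_apply, hB]

theorem scalar_sub_mul_allOnes [Fintype m] [DecidableEq m] {T : Matrix m m R} {r : R}
    (hT : ∀ i, ∑ j, T i j = r) (x : R) :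
    (scalar m x - T) * allOnes m o R = (x - r) • allOnes m o R :=
  mul_allOnes_of_forall_sum_eq fun i => by simp [Finset.sum_sub_distrib, diagonal_apply, hT]

theorem add_transpose_submatrix {V : Type*} [DecidableEq V] [DecidableEq l]
    {P : Matrix V V R} (hP : P + Pᵀ = allOnes V V R - 1) {f : l → V} (hf : Function.Injective f) :
    P.submatrix f f + (P.submatrix f f)ᵀ = allOnes l l R - 1 := by
  calc P.submatrix f f + (P.submatrix f f)ᵀ = (P + Pᵀ).submatrix f f := rfl
    _ = allOnes l l R - 1 := by rw [hP]; ext; simp [one_apply, hf.eq_iff]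

variable [Fintype l] [Fintype m] [DecidableEq l] [DecidableEq m]

theorem det_fromBlocks_of_mul_eq {A : Matrix l l R} {B : Matrix l m R} {C : Matrix m l R}
    {D : Matrix m m R} {Y : Matrix m l R} (hY : D * Y = C) :
    (fromBlocks A B C D).det = D.det * (A - B * Y).det := by
  have : fromBlocks A B C D = fromBlocks (A - B * Y) B 0 D * fromBlocks 1 0 Y 1 := by
    simp [fromBlocks_multiply, hY]
  rw [this, det_mul, det_fromBlocks_zero₂₁, det_fromBlocks_zero₁₂, det_one, det_one, one_mul,
    mul_one, mul_comm]

end CommRing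

section Field

variable {K : Type*} [Field K] [Fintype l] [Fintype m] [Fintype o]
  [DecidableEq l] [DecidableEq m] [DecidableEq o]

theorem det_add_smul_allOnes {W : Matrix l l K} (hW : IsUnit W.det) (s : K) :
    (W + s • allOnes l l K).det = W.det + s * ((W + allOnes l l K).det - W.det) := by
  have key (s : K) : (W + s • allOnes l l K).det = W.det * (1 + s * ∑ j, ∑ i, W⁻¹ i j) := by
    have : s • allOnes l l K =
        replicateCol Unit (fun _ : l => s) * replicateRow Unit (fun _ : l => (1 : K)) := by
      ext; simp [mul_apply]
    rw [this, det_add_replicateCol_mul_replicateRow hW, det_unique (n := Unit)]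
    simp [mul_apply, Finset.sum_mul, mul_comm s]
  have h1 := key 1
  rw [one_smul] at h1
  rw [key, h1]
  ring

theorem det_scalar_sub_cycleBlocks {P : Matrix l l K} {Q : Matrix m m K} {S : Matrix o o K}
    {r x : K} (hQ : ∀ i, ∑ j, Q i j = r) (hS : ∀ i, ∑ j, S i j = r) (hx : x ≠ r)
    (hP : IsUnit (scalar l x - P).det) :
    (scalar _ x - cycleBlocks P Q S).det * (x - r) ^ 2 =
      (scalar m x - Q).det * (scalar o x - S).det *
        ((x - r) ^ 2 * (scalar l x - P).det - Fintype.card m * Fintype.card o *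
          ((scalar l x - (P - allOnes l l K)).det - (scalar l x - P).det)) := by
  have hxr : x - r ≠ 0 := sub_ne_zero.mpr hx
  have hsplit : scalar _ x - cycleBlocks P Q S =
      fromBlocks (scalar l x - P) (fromCols (-allOnes l m K) 0) (fromRows 0 (-allOnes o l K))
        (fromBlocks (scalar m x - Q) (-allOnes m o K) 0 (scalar o x - S)) := by
    ext (i | i | i) (j | j | j) <;> simp [cycleBlocks, diagonal_apply]
  have hY : fromBlocks (scalar m x - Q) (-allOnes m o K) 0 (scalar o x - S) *
      fromRows (-((Fintype.card o : K) / (x - r) ^ 2) • allOnes m l K)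
        (-(x - r)⁻¹ • allOnes o l K) = fromRows 0 (-allOnes o l K) := by
    simp only [fromBlocks_mul_fromRows, Matrix.mul_smul, scalar_sub_mul_allOnes hQ,
      scalar_sub_mul_allOnes hS, Matrix.neg_mul, allOnes_mul_allOnes, Matrix.zero_mul]
    congr 1 <;> ext <;> simp [field]
  have hBY : fromCols (-allOnes l m K) (0 : Matrix l o K) *
      fromRows (-((Fintype.card o : K) / (x - r) ^ 2) • allOnes m l K)
        (-(x - r)⁻¹ • allOnes o l K) =
      ((Fintype.card m * Fintype.card o : K) / (x - r) ^ 2) • allOnes l l K := by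
    simp only [fromCols_mul_fromRows, Matrix.mul_smul, Matrix.neg_mul, allOnes_mul_allOnes,
      Matrix.zero_mul]
    ext; simp [field]
  rw [hsplit, det_fromBlocks_of_mul_eq hY, det_fromBlocks_zero₂₁, hBY, sub_eq_add_neg _ (_ • _),
    ← neg_smul, det_add_smul_allOnes hP, sub_sub_eq_add_sub, add_sub_right_comm]
  field_simp
  ring

theorem charpoly_cycleBlocks [Infinite K] {P : Matrix l l K} {Q : Matrix m m K}
    {S : Matrix o o K} {r : K} (hQ : ∀ i, ∑ j, Q i j = r) (hS : ∀ i, ∑ j, S i j = r) :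
    (X - C r) ^ 2 * (cycleBlocks P Q S).charpoly =
      Q.charpoly * S.charpoly * ((X - C r) ^ 2 * P.charpoly -
        C (Fintype.card m * Fintype.card o : K) * ((P - allOnes l l K).charpoly - P.charpoly)) := by
  refine eq_of_eval_eq_of_eval_ne_zero (mul_ne_zero (X_sub_C_ne_zero r) P.charpoly_monic.ne_zero)
    fun x hx => ?_
  simp only [eval_mul, eval_sub, eval_X, eval_C, eval_charpoly, mul_ne_zero_iff, sub_ne_zero,
    eval_pow] at hx ⊢
  rw [mul_comm]
  exact det_scalar_sub_cycleBlocks hQ hS hx.1 hx.2.isUnit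

theorem charpoly_sub_allOnes_of_add_transpose_eq [Infinite K] {P : Matrix l l K}
    (hP : P + Pᵀ = allOnes l l K - 1) :
    (P - allOnes l l K).charpoly = (-1) ^ Fintype.card l * P.charpoly.comp (-X - 1) := by
  refine Polynomial.funext fun x => ?_
  have : scalar l x - (P - allOnes l l K) = -(scalar l (-x - 1) - P)ᵀ := by
    rw [sub_eq_iff_eq_add.mp hP.symm]
    ext i j
    simp only [sub_apply, add_apply, neg_apply, transpose_apply, scalar_apply, diagonal_apply,
      one_apply, eq_comm]
    split_ifs <;> ring
  rw [eval_charpoly, this, det_neg, det_transpose, ← eval_charpoly, eval_mul, eval_comp]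
  simp

theorem charpoly_eq_of_charpoly_cycleBlocks_eq [Infinite K] {P P' : Matrix l l K}
    {Q : Matrix m m K} {S : Matrix o o K} {r : K}
    (hP : P + Pᵀ = allOnes l l K - 1) (hP' : P' + P'ᵀ = allOnes l l K - 1)
    (hQ : ∀ i, ∑ j, Q i j = r) (hS : ∀ i, ∑ j, S i j = r)
    (h : (cycleBlocks P Q S).charpoly = (cycleBlocks P' Q S).charpoly) :
    P.charpoly = P'.charpoly := by
  have key {P : Matrix l l K} (hP : P + Pᵀ = allOnes l l K - 1) :
      (X - C r) ^ 2 * (cycleBlocks P Q S).charpoly = Q.charpoly * S.charpoly *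
        cycleFactor r (Fintype.card m * Fintype.card o) (Fintype.card l) P.charpoly := by
    rw [charpoly_cycleBlocks hQ hS, charpoly_sub_allOnes_of_add_transpose_eq hP, cycleFactor]
  refine cycleFactor_injective r (Fintype.card m * Fintype.card o) (Fintype.card l) <|
    mul_left_cancel₀ (mul_ne_zero Q.charpoly_monic.ne_zero S.charpoly_monic.ne_zero) ?_
  rw [← key hP, ← key hP', h]

end Field

end Matrix

def cyclicComposition {R V : Type*} [Zero R] [One R] (T : Fin 3 → Matrix V V R) :
    Matrix (Fin 3 × V) (Fin 3 × V) R :=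
  Matrix.of fun p q => if p.1 = q.1 then T p.1 p.2 q.2 else if q.1 = p.1 + 1 then 1 else 0

def blockInclusion {ι V : Type*} (c : Fin 3) (f : ι → V) : ι ⊕ V ⊕ V → Fin 3 × V :=
  Sum.elim (fun i => (c, f i)) (Sum.elim (fun j => (c + 1, j)) (fun j => (c + 2, j)))

theorem blockInclusion_injective {ι V : Type*} (c : Fin 3) {f : ι → V}
    (hf : Function.Injective f) : Function.Injective (blockInclusion c f) := by
  rintro (i | i | i) (j | j | j) h <;> fin_cases c <;> simp_all [blockInclusion, hf.eq_iff]

theorem submatrix_cyclicComposition {R ι V : Type*} [Zero R] [One R] (T : Fin 3 → Matrix V V R)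
    (c : Fin 3) (f : ι → V) :
    (cyclicComposition T).submatrix (blockInclusion c f) (blockInclusion c f) =
      cycleBlocks ((T c).submatrix f f) (T (c + 1)) (T (c + 2)) := by
  ext (i | i | i) (j | j | j) <;> fin_cases c <;> rfl

theorem isTournament_cyclicComposition {V : Type} [Fintype V] [DecidableEq V]
    {T : Fin 3 → Matrix V V ℚ} (hT : ∀ c, IsTournament (T c)) :
    IsTournament (cyclicComposition T) := by
  refine ⟨fun p q => ?_, fun p => by simp [cyclicComposition, (hT p.1).2.1], ?_⟩
  · simp only [cyclicComposition, of_apply]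
    split_ifs
    exacts [(hT _).1 _ _, Or.inr rfl, Or.inl rfl]
  · ext ⟨c, i⟩ ⟨d, j⟩
    by_cases hcd : c = d
    · subst hcd
      simpa [cyclicComposition, one_apply] using congr_fun (congr_fun (hT c).2.2 i) j
    · have : ¬ (c, i) = (d, j) := fun h => hcd (congrArg Prod.fst h)
      fin_cases c <;> fin_cases d <;> simp_all [cyclicComposition]

theorem isRegularTournament_cyclicComposition {V : Type} [Fintype V]
    {T : Fin 3 → Matrix V V ℚ} (hT : ∀ c, IsRegularTournament (T c)) :
    IsRegularTournament (cyclicComposition T) := by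
  rintro ⟨c, i⟩
  rw [Fintype.sum_prod_type, Fin.sum_univ_three]
  have := hT c i
  fin_cases c <;> simp_all [cyclicComposition, Fintype.card_prod] <;> ring

theorem specMono_zero {V : Type} [Fintype V] [DecidableEq V] (A : Matrix V V ℚ) :
    SpecMono 0 A :=
  fun _ _ _ _ => congrArg _ (Subsingleton.elim _ _)

theorem specMono_of_specMono_cyclicComposition {n : ℕ} {T : Fin 3 → Matrix (Fin n) (Fin n) ℚ}
    (hT : ∀ c, IsTournament (T c)) (hr : ∀ c, IsRegularTournament (T c))
    (h : SpecMono (3 * n - 1) (cyclicComposition T)) (c : Fin 3) :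
    SpecMono (n - 1) (T c) := by
  rcases n.eq_zero_or_pos with rfl | hn
  · exact specMono_zero _
  intro f g hf hg
  let e : Fin (3 * n - 1) ≃ Fin (n - 1) ⊕ Fin n ⊕ Fin n :=
    Fintype.equivOfCardEq (by simp; omega)
  have hχ (f : Fin (n - 1) → Fin n) : ((cyclicComposition T).submatrix
      (blockInclusion c f ∘ e) (blockInclusion c f ∘ e)).charpoly =
      (cycleBlocks ((T c).submatrix f f) (T (c + 1)) (T (c + 2))).charpoly := by
    rw [← submatrix_submatrix, submatrix_cyclicComposition]
    exact charpoly_reindex e.symm _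
  refine charpoly_eq_of_charpoly_cycleBlocks_eq (add_transpose_submatrix (hT c).2.2 hf)
    (add_transpose_submatrix (hT c).2.2 hg) (hr (c + 1)) (hr (c + 2)) ?_
  rw [← hχ f, ← hχ g]
  exact h _ _ ((blockInclusion_injective c hf).comp e.injective)
    ((blockInclusion_injective c hg).comp e.injective)

theorem stmt_10 (n : ℕ) (A B C : Matrix (Fin n) (Fin n) ℚ)
    (hA : IsTournament A) (hB : IsTournament B) (hC : IsTournament C)
    (hrA : IsRegularTournament A) (hrB : IsRegularTournament B)
    (hrC : IsRegularTournament C)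
    (M : Matrix (Fin 3 × Fin n) (Fin 3 × Fin n) ℚ)
    (hM : ∀ p q : Fin 3 × Fin n,
      M p q = if p.1 = q.1 then ![A, B, C] p.1 p.2 q.2
        else if q.1 = p.1 + 1 then 1 else 0) :
    (IsTournament M ∧ IsRegularTournament M) ∧
      ((¬ SpecMono (n - 1) A ∨ ¬ SpecMono (n - 1) B ∨ ¬ SpecMono (n - 1) C) →
        ¬ SpecMono (3 * n - 1) M) := by
  obtain rfl : M = cyclicComposition ![A, B, C] := Matrix.ext hM
  have hT : ∀ c, IsTournament (![A, B, C] c) := by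
    intro c; fin_cases c <;> assumption
  have hr : ∀ c, IsRegularTournament (![A, B, C] c) := by
    intro c; fin_cases c <;> assumption
  refine ⟨⟨isTournament_cyclicComposition hT, isRegularTournament_cyclicComposition hr⟩, ?_⟩
  intro hnot hspec
  have hblocks := specMono_of_specMono_cyclicComposition hT hr hspec
  rcases hnot with h | h | h
  exacts [h (hblocks 0), h (hblocks 1), h (hblocks 2)]
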